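/- Let d ≥ 1, β ∈ (0,1), A, B > 0, let E be a normed real vector space, and let T be a linear map from the space of bounded continuous functions ℝ^d → ℝ to E such that ‖T g‖ ≤ A sup_x |g(x)| for every bounded continuous g, and ‖T g‖ ≤ B sup_x |Dg(x)| for every bounded continuously differentiable g with bounded gradient. Then there exists a constant c = c(d,β) > 0, independent of T, A, B, such that ‖T g‖ ≤ c A^{1−β} B^β [g]_β for every bounded continuous g with [g]_β < ∞. -/

import Mathlib

/-!
Mollify `g` at scale `r`: convolving with a normalized bump supported in `ball 0 (r/2)` gives a
smooth `h` with `‖g - h‖ ≤ [g]_β r^β`, and, since the kernel is Lipschitz and its translates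
all have the same integral, `h x - h x₀ = ∫ (k (x - s) - k (x₀ - s)) (g s - g x₀) ds` sees only
the oscillation of `g` on `ball x₀ r`, whence `‖Dh‖ ≤ C [g]_β r^(β-1)`. By scaling it suffices to
do this for `r = 1`. Then `‖T g‖ ≤ A ‖g - h‖ + B ‖Dh‖ ≤ (1 + C) [g]_β A r^β`, and `r = B / A`
balances the two terms.
-/

open scoped BoundedContinuousFunction

noncomputable section

/-- The `β`-Hölder seminorm `[f]_β` (as the least admissible Hölder constant). -/
def holderSemi {E F : Type*} [NormedAddCommGroup E] [NormedAddCommGroup F]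
    (β : ℝ) (f : E → F) : ℝ :=
  sInf {C : ℝ | 0 ≤ C ∧ ∀ x y, ‖f x - f y‖ ≤ C * ‖x - y‖ ^ β}

open MeasureTheory Metric Function ContinuousLinearMap
open scoped ContDiff Convolution

section Mollification

variable {V : Type*} [NormedAddCommGroup V] [NormedSpace ℝ V] [FiniteDimensional ℝ V]

theorem abs_convolution_sub_le_of_lipschitzWith [MeasurableSpace V] [BorelSpace V]
    (μ : Measure V) [μ.IsAddHaarMeasure] {k : V → ℝ} {K : NNReal} {R : ℝ}
    (hk : LipschitzWith K k) (hsupp : support k ⊆ ball 0 R) {g : V → ℝ} (hg : Continuous g)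
    {x₀ x : V} {ρ δ : ℝ} (hx : x ∈ ball x₀ ρ) (hδ : ∀ s ∈ ball x₀ (R + ρ), |g s - g x₀| ≤ δ) :
    |(k ⋆[lsmul ℝ ℝ, μ] g) x - (k ⋆[lsmul ℝ ℝ, μ] g) x₀|
      ≤ K * δ * μ.real (ball x₀ (R + ρ)) * ‖x - x₀‖ := by
  have hk0 : ∀ y, R ≤ ‖y‖ → k y = 0 := fun y hy =>
    notMem_support.1 fun h => (mem_ball_zero_iff.1 (hsupp h)).not_ge hy
  have hkc : HasCompactSupport k := HasCompactSupport.intro (isCompact_closedBall 0 R)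
    fun y hy => hk0 y (le_of_lt (by simpa using hy))
  have hki : ∀ y, Integrable (fun s => k (y - s)) μ := fun y =>
    (hk.continuous.integrable_of_hasCompactSupport hkc).comp_sub_left y
  have hkgi : ∀ y, Integrable (fun s => k (y - s) * g s) μ := fun y => by
    simpa using
      (hkc.convolutionExists_left (lsmul ℝ ℝ) hk.continuous hg.locallyIntegrable y).integrable_swap
  have hmean : ∫ s, (k (x - s) - k (x₀ - s)) * g x₀ ∂μ = 0 := by
    rw [integral_mul_const, integral_sub (hki x) (hki x₀), integral_sub_left_eq_self,
      integral_sub_left_eq_self, sub_self, zero_mul]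
  have hdiff : (k ⋆[lsmul ℝ ℝ, μ] g) x - (k ⋆[lsmul ℝ ℝ, μ] g) x₀
      = ∫ s, (k (x - s) - k (x₀ - s)) * (g s - g x₀) ∂μ := by
    simp only [convolution_eq_swap, lsmul_apply, smul_eq_mul]
    rw [← sub_zero (_ - _), ← hmean, ← integral_sub (hkgi x) (hkgi x₀), ← integral_sub]
    · congr 1 with s
      ring
    · exact (hkgi x).sub (hkgi x₀)
    · exact ((hki x).sub (hki x₀)).mul_const _
  have hvanish : ∀ s ∉ ball x₀ (R + ρ), (k (x - s) - k (x₀ - s)) * (g s - g x₀) = 0 := by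
    intro s hs
    rw [mem_ball, not_lt] at hs
    have hxs := dist_triangle s x x₀
    have hxx₀ := mem_ball.1 hx
    have hρ := dist_nonneg.trans_lt hxx₀
    rw [hk0 (x - s), hk0 (x₀ - s), sub_zero, zero_mul] <;>
      rw [← dist_eq_norm, dist_comm] <;> linarith
  have hbound : ∀ s ∈ ball x₀ (R + ρ),
      ‖(k (x - s) - k (x₀ - s)) * (g s - g x₀)‖ ≤ K * ‖x - x₀‖ * δ := by
    intro s hs
    rw [norm_mul]
    refine mul_le_mul ?_ (hδ s hs) (norm_nonneg _) (by positivity)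
    simpa [dist_sub_right, dist_eq_norm] using hk.dist_le_mul (x - s) (x₀ - s)
  rw [hdiff, ← Real.norm_eq_abs, ← setIntegral_eq_integral_of_forall_compl_eq_zero hvanish]
  calc _ ≤ K * ‖x - x₀‖ * δ * μ.real (ball x₀ (R + ρ)) :=
        norm_setIntegral_le_of_norm_le_const measure_ball_lt_top hbound
    _ = _ := by ring

theorem exists_contDiff_approx_of_oscillation_le_one :
    ∃ C : ℝ, 0 ≤ C ∧ ∀ (g : V → ℝ) (δ : ℝ), Continuous g →
      (∀ x y, ‖x - y‖ < 1 → |g x - g y| ≤ δ) →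
      ∃ h : V → ℝ, ContDiff ℝ ∞ h ∧ (∀ x, |g x - h x| ≤ δ) ∧ ∀ x, ‖fderiv ℝ h x‖ ≤ C * δ := by
  borelize V
  let μ : Measure V := Measure.addHaar
  let φ : ContDiffBump (0 : V) := ⟨1 / 4, 1 / 2, by norm_num, by norm_num⟩
  obtain ⟨K, hK⟩ := (φ.contDiff_normed (μ := μ) (n := 1)).lipschitzWith_of_hasCompactSupport
    φ.hasCompactSupport_normed one_ne_zero
  refine ⟨K * μ.real (ball 0 1), by positivity, fun g δ hg hosc => ?_⟩
  have hδ : 0 ≤ δ := by simpa using hosc 0 0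
  refine ⟨φ.normed μ ⋆[lsmul ℝ ℝ, μ] g, ?_, fun x => ?_, fun x₀ => ?_⟩
  · exact φ.hasCompactSupport_normed.contDiff_convolution_left _ φ.contDiff_normed
      hg.locallyIntegrable
  · rw [abs_sub_comm, ← Real.dist_eq]
    refine φ.dist_normed_convolution_le hg.aestronglyMeasurable fun y hy => ?_
    rw [Real.dist_eq]
    exact hosc y x ((mem_ball_iff_norm.1 hy).trans (by norm_num))
  · have hR : φ.rOut + 1 / 2 = 1 := by norm_num [φ]
    refine norm_fderiv_le_of_lip' ℝ (by positivity) ?_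
    filter_upwards [ball_mem_nhds x₀ (by norm_num : (0 : ℝ) < 1 / 2)] with x hx
    have hlip := abs_convolution_sub_le_of_lipschitzWith μ hK φ.support_normed_eq.subset hg hx
      fun s hs => hosc s x₀ (by rwa [hR, mem_ball_iff_norm] at hs)
    rw [hR, Measure.addHaar_real_ball_center] at hlip
    rw [Real.norm_eq_abs]
    exact hlip.trans_eq (by ring)

theorem exists_contDiff_approx_of_oscillation_le :
    ∃ C : ℝ, 0 ≤ C ∧ ∀ r : ℝ, 0 < r → ∀ (g : V → ℝ) (δ : ℝ), Continuous g →
      (∀ x y, ‖x - y‖ < r → |g x - g y| ≤ δ) →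
      ∃ h : V → ℝ, ContDiff ℝ ∞ h ∧ (∀ x, |g x - h x| ≤ δ) ∧
        ∀ x, ‖fderiv ℝ h x‖ ≤ C * δ / r := by
  obtain ⟨C, hC, hunit⟩ := exists_contDiff_approx_of_oscillation_le_one (V := V)
  refine ⟨C, hC, fun r hr g δ hg hosc => ?_⟩
  obtain ⟨h, hh, hgh, hdh⟩ := hunit (fun x => g (r • x)) δ (hg.comp (continuous_const_smul r))
    fun x y hxy => hosc _ _ <| by
      rw [← smul_sub, norm_smul, Real.norm_of_nonneg hr.le]
      exact mul_lt_of_lt_one_right hr hxy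
  refine ⟨fun x => h (r⁻¹ • x), hh.comp (contDiff_const_smul _), fun x => ?_, fun x => ?_⟩
  · simpa [smul_smul, hr.ne'] using hgh (r⁻¹ • x)
  · rw [fderiv_comp_smul, norm_smul, norm_inv, Real.norm_of_nonneg hr.le, inv_mul_eq_div]
    exact div_le_div_of_nonneg_right (hdh _) hr.le

theorem BoundedContinuousFunction.exists_contDiff_approx_of_oscillation_le :
    ∃ C : ℝ, 0 ≤ C ∧ ∀ r : ℝ, 0 < r → ∀ (g : V →ᵇ ℝ) (δ : ℝ),
      (∀ x y, ‖x - y‖ < r → |g x - g y| ≤ δ) →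
      ∃ h : V →ᵇ ℝ, ContDiff ℝ ∞ h ∧ ‖g - h‖ ≤ δ ∧ ∀ x, ‖fderiv ℝ h x‖ ≤ C * δ / r := by
  obtain ⟨C, hC, happrox⟩ := _root_.exists_contDiff_approx_of_oscillation_le (V := V)
  refine ⟨C, hC, fun r hr g δ hosc => ?_⟩
  have hδ : 0 ≤ δ := by simpa using hosc 0 0 (by simpa using hr)
  obtain ⟨h, hh, hgh, hdh⟩ := happrox r hr g δ g.continuous hosc
  let e : V →ᵇ ℝ :=
    .ofNormedAddCommGroup (fun x => g x - h x) (g.continuous.sub hh.continuous) δ hgh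
  have he : ⇑(g - e) = h := funext fun x => by simp [e]
  refine ⟨g - e, he ▸ hh, ?_, he ▸ hdh⟩
  rw [sub_sub_cancel]
  exact norm_ofNormedAddCommGroup_le _ hδ hgh

end Mollification

theorem holderSemi_nonneg {E F : Type*} [NormedAddCommGroup E] [NormedAddCommGroup F] (β : ℝ)
    (f : E → F) : 0 ≤ holderSemi β f :=
  Real.sInf_nonneg fun _ hC => hC.1

theorem norm_sub_le_holderSemi_mul {E F : Type*} [NormedAddCommGroup E] [NormedAddCommGroup F]
    {β : ℝ} {f : E → F} (hf : ∃ C, 0 ≤ C ∧ ∀ x y, ‖f x - f y‖ ≤ C * ‖x - y‖ ^ β) (x y : E) :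
    ‖f x - f y‖ ≤ holderSemi β f * ‖x - y‖ ^ β := by
  rcases eq_or_ne x y with rfl | hxy
  · simpa using mul_nonneg (holderSemi_nonneg β f) (Real.rpow_nonneg le_rfl β)
  have hpos : 0 < ‖x - y‖ ^ β := Real.rpow_pos_of_pos (norm_pos_iff.2 (sub_ne_zero.2 hxy)) β
  rw [← div_le_iff₀ hpos]
  exact le_csInf hf fun C hC => (div_le_iff₀ hpos).2 (hC.2 x y)

theorem interpolation_inequality_general (d : ℕ) (β : ℝ) (hβ : 0 < β ∧ β < 1) :
    ∃ c : ℝ, 0 < c ∧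
      ∀ (E : Type) [NormedAddCommGroup E] [NormedSpace ℝ E]
        (A B : ℝ), 0 < A → 0 < B →
        ∀ T : (EuclideanSpace ℝ (Fin d) →ᵇ ℝ) →ₗ[ℝ] E,
          (∀ g : EuclideanSpace ℝ (Fin d) →ᵇ ℝ, ‖T g‖ ≤ A * ‖g‖) →
          (∀ g : EuclideanSpace ℝ (Fin d) →ᵇ ℝ, ContDiff ℝ 1 (⇑g) →
            BddAbove (Set.range fun x => ‖fderiv ℝ (⇑g) x‖) →
            ‖T g‖ ≤ B * ⨆ x, ‖fderiv ℝ (⇑g) x‖) →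
          ∀ g : EuclideanSpace ℝ (Fin d) →ᵇ ℝ,
            (∃ C, 0 ≤ C ∧ ∀ x y, |g x - g y| ≤ C * ‖x - y‖ ^ β) →
            ‖T g‖ ≤ c * A ^ (1 - β) * B ^ β * holderSemi β (⇑g) := by
  obtain ⟨C, hC, happrox⟩ := BoundedContinuousFunction.exists_contDiff_approx_of_oscillation_le
    (V := EuclideanSpace ℝ (Fin d))
  refine ⟨1 + C, by positivity, fun E _ _ A B hA hB T hTA hTB g hg => ?_⟩
  set M := holderSemi β (⇑g)
  have hosc : ∀ x y, ‖x - y‖ < B / A → |g x - g y| ≤ M * (B / A) ^ β := fun x y hxy => by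
    rw [← Real.norm_eq_abs]
    refine (norm_sub_le_holderSemi_mul (by simpa only [Real.norm_eq_abs] using hg) x y).trans ?_
    exact mul_le_mul_of_nonneg_left (Real.rpow_le_rpow (norm_nonneg _) hxy.le hβ.1.le)
      (holderSemi_nonneg β _)
  obtain ⟨h, hh, hgh, hdh⟩ := happrox (B / A) (div_pos hB hA) g _ hosc
  have hAB : A * (B / A) ^ β = A ^ (1 - β) * B ^ β := by
    rw [Real.div_rpow hB.le hA.le, Real.rpow_sub hA, Real.rpow_one]
    ring
  calc ‖T g‖ = ‖T (g - h) + T h‖ := by rw [← map_add, sub_add_cancel]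
    _ ≤ A * ‖g - h‖ + B * ⨆ x, ‖fderiv ℝ h x‖ :=
        norm_add_le_of_le (hTA _) (hTB h (hh.of_le (by exact_mod_cast le_top))
          ⟨_, Set.forall_mem_range.2 hdh⟩)
    _ ≤ A * (M * (B / A) ^ β) + B * (C * (M * (B / A) ^ β) / (B / A)) := by
        gcongr; exact ciSup_le hdh
    _ = (1 + C) * (A * (B / A) ^ β) * M := by field_simp
    _ = (1 + C) * A ^ (1 - β) * B ^ β * M := by rw [hAB]; ring

/-- interpolation inequality `(C_b, C_b^1)_{β,∞} = C_b^β`. If a linear map `T`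
on bounded continuous functions satisfies `‖Tg‖ ≤ A ‖g‖_∞` and `‖Tg‖ ≤ B ‖Dg‖_∞` (for `C¹`
functions with bounded gradient), then `‖Tg‖ ≤ c A^{1-β} B^β [g]_β` for `β`-Hölder `g`, with
`c = c(d,β)` independent of `T`, `A`, `B`. -/
theorem interpolation_inequality (d : ℕ) (hd : 1 ≤ d) (β : ℝ) (hβ : 0 < β ∧ β < 1) :
    ∃ c : ℝ, 0 < c ∧
      ∀ (E : Type) [NormedAddCommGroup E] [NormedSpace ℝ E]
        (A B : ℝ), 0 < A → 0 < B →
        ∀ T : (EuclideanSpace ℝ (Fin d) →ᵇ ℝ) →ₗ[ℝ] E,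
          (∀ g : EuclideanSpace ℝ (Fin d) →ᵇ ℝ, ‖T g‖ ≤ A * ‖g‖) →
          (∀ g : EuclideanSpace ℝ (Fin d) →ᵇ ℝ, ContDiff ℝ 1 (⇑g) →
            BddAbove (Set.range fun x => ‖fderiv ℝ (⇑g) x‖) →
            ‖T g‖ ≤ B * ⨆ x, ‖fderiv ℝ (⇑g) x‖) →
          ∀ g : EuclideanSpace ℝ (Fin d) →ᵇ ℝ,
            (∃ C, 0 ≤ C ∧ ∀ x y, |g x - g y| ≤ C * ‖x - y‖ ^ β) →
            ‖T g‖ ≤ c * A ^ (1 - β) * B ^ β * holderSemi β (⇑g) :=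
  interpolation_inequality_general d β hβ
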